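/- arXiv:0909.3951 — 2 statements merged into one kernel-verified Lean document; each statement's English description precedes it below -/
import Mathlib

section
/- Let P be a (second countable) Hilbert C_0(Y)-module. The family of sets U_{p,ε} = {h ∈ P_y : y ∈ U, ‖h − p̂(y)‖ < ε}, for U open in Y, p ∈ P, ε > 0, is a base for a second countable topology on E_P = ⊔_{y∈Y} P_y which makes E_P a Hilbert bundle over Y. -/
noncomputable section
open scoped ZeroAtInfty
open Topology Filter ComplexConjugate

namespace Stabilization

/-- The set of continuous sections vanishing at infinity of a family of normed fibers,
relative to a given topology on the total space of the bundle. -/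
def C0Sections {Y : Type} [TopologicalSpace Y] (H : Y → Type)
    [∀ y, NormedAddCommGroup (H y)] (tE : TopologicalSpace ((y : Y) × H y)) :
    Set ((y : Y) → H y) :=
  {F | @Continuous Y ((y : Y) × H y) _ tE (fun y => ⟨y, F y⟩) ∧
    Tendsto (fun y => ‖F y‖) (cocompact Y) (nhds 0)}

/-- A Hilbert bundle over `Y` (Definition 2.1 of the paper): a family of Hilbert spaces
`H y` together with a second countable topology on the total space such that
(i) fiberwise addition and scalar multiplication are continuous, (ii) the norm along any
continuous section vanishing at infinity is continuous, (iii) the continuous sections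
vanishing at infinity fill out every fiber, and (iv) the sets `U_{F,ε}` form a base. -/
structure HilbertBundle (Y : Type) [TopologicalSpace Y] where
  H : Y → Type
  [nacg : ∀ y, NormedAddCommGroup (H y)]
  [ips : ∀ y, InnerProductSpace ℂ (H y)]
  [cpl : ∀ y, CompleteSpace (H y)]
  topE : TopologicalSpace ((y : Y) × H y)
  secondCountable : @SecondCountableTopology ((y : Y) × H y) topE
  add_cont : @Continuous {p : ((y : Y) × H y) × ((y : Y) × H y) // p.1.1 = p.2.1}
      ((y : Y) × H y)
      (@instTopologicalSpaceSubtype _ _ (@instTopologicalSpaceProd _ _ topE topE)) topE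
      (fun p => ⟨p.1.1.1, p.1.1.2 + cast (congrArg H p.2).symm p.1.2.2⟩)
  smul_cont : @Continuous (ℂ × (y : Y) × H y) ((y : Y) × H y)
      (@instTopologicalSpaceProd _ _ _ topE) topE
      (fun p => ⟨p.2.1, p.1 • p.2.2⟩)
  norm_cont : ∀ F ∈ C0Sections H topE, Continuous fun y => ‖F y‖
  fiber_full : ∀ (y : Y) (v : H y), ∃ F ∈ C0Sections H topE, F y = v
  isBasis : @TopologicalSpace.IsTopologicalBasis ((y : Y) × H y) topE
      {S | ∃ (U : Set Y) (F : (y : Y) → H y) (ε : ℝ), IsOpen U ∧ F ∈ C0Sections H topE ∧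
        0 < ε ∧ S = {e | e.1 ∈ U ∧ ‖e.2 - F e.1‖ < ε}}

attribute [instance] HilbertBundle.nacg HilbertBundle.ips HilbertBundle.cpl

/-- A Hilbert `C₀(Y)`-module structure on `P`: a right `C₀(Y)`-module action and a
`C₀(Y)`-valued inner product, complete for the norm `‖p‖ = ‖⟨p,p⟩‖^{1/2}` (completeness
being recorded by a `CompleteSpace` instance on `P` at use sites). -/
class HilbertCzeroModule (Y : Type) [TopologicalSpace Y] (P : Type)
    [NormedAddCommGroup P] [NormedSpace ℂ P] where
  msmul : P → C₀(Y, ℂ) → P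
  minner : P → P → C₀(Y, ℂ)
  msmul_add_left : ∀ (p q : P) (f : C₀(Y, ℂ)), msmul (p + q) f = msmul p f + msmul q f
  msmul_add_right : ∀ (p : P) (f g : C₀(Y, ℂ)), msmul p (f + g) = msmul p f + msmul p g
  msmul_mul : ∀ (p : P) (f g : C₀(Y, ℂ)), msmul (msmul p f) g = msmul p (f * g)
  msmul_csmul_left : ∀ (c : ℂ) (p : P) (f : C₀(Y, ℂ)), msmul (c • p) f = c • msmul p f
  msmul_csmul_right : ∀ (c : ℂ) (p : P) (f : C₀(Y, ℂ)), msmul p (c • f) = c • msmul p f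
  minner_add_right : ∀ p q r : P, minner p (q + r) = minner p q + minner p r
  minner_conj : ∀ p q : P, minner p q = star (minner q p)
  minner_csmul_right : ∀ (c : ℂ) (p q : P), minner p (c • q) = c • minner p q
  minner_msmul_right : ∀ (p q : P) (f : C₀(Y, ℂ)), minner p (msmul q f) = minner p q * f
  minner_self_re_nonneg : ∀ (p : P) (y : Y), 0 ≤ (minner p p y).re
  minner_self_im : ∀ (p : P) (y : Y), (minner p p y).im = 0
  norm_eq : ∀ p : P, ‖p‖ = Real.sqrt ‖minner p p‖

/-- The module action, with the base space explicit. -/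
def modSMul (Y : Type) [TopologicalSpace Y] {P : Type} [NormedAddCommGroup P]
    [NormedSpace ℂ P] [HilbertCzeroModule Y P] (p : P) (f : C₀(Y, ℂ)) : P :=
  HilbertCzeroModule.msmul p f

/-- The `C₀(Y)`-valued inner product, with the base space explicit. -/
def modIP (Y : Type) [TopologicalSpace Y] {P : Type} [NormedAddCommGroup P]
    [NormedSpace ℂ P] [HilbertCzeroModule Y P] (p q : P) : C₀(Y, ℂ) :=
  HilbertCzeroModule.minner p q

variable (Y : Type) [TopologicalSpace Y]
variable (P : Type) [NormedAddCommGroup P] [NormedSpace ℂ P] [HilbertCzeroModule Y P]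

/-- `I_y P`: the closed submodule generated by products `p·f` with `f(y) = 0`. -/
def fiberIdeal (y : Y) : Submodule ℂ P :=
  Submodule.span ℂ {x | ∃ (f : C₀(Y, ℂ)) (p : P), f y = 0 ∧ x = modSMul Y p f}

/-- The fiber `P_y = P / I_y P` of the Hilbert bundle associated to `P`. -/
abbrev Fib (y : Y) : Type := P ⧸ fiberIdeal Y P y

/-- `p ↦ p̂(y)`, the image of `p` in the fiber `P_y`. -/
def fibMk (y : Y) : P → Fib Y P y := Submodule.Quotient.mk

/-- The fiber norm of `p̂(y)`, computed from a representative. -/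
def fibNormRep (y : Y) (p : P) : ℝ := Real.sqrt ((modIP Y p p) y).re

/-- The norm on the fiber `P_y` (the common value of `fibNormRep` over representatives). -/
def fibNormQ (y : Y) (h : Fib Y P y) : ℝ :=
  sInf {r | ∃ p : P, h = fibMk Y P y p ∧ r = fibNormRep Y P y p}

/-- The total space `E_P = ⊔_y P_y` of the bundle associated to `P`. -/
abbrev TotalP : Type := (y : Y) × Fib Y P y

/-- The basic sets `U_{p,ε}` of the bundle `E_P`. -/
def basisP : Set (Set (TotalP Y P)) :=
  {S | ∃ (U : Set Y) (p : P) (ε : ℝ), IsOpen U ∧ 0 < ε ∧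
    S = {e : TotalP Y P | e.1 ∈ U ∧ fibNormQ Y P e.1 (e.2 - fibMk Y P e.1 p) < ε}}

/-- The topology on `E_P` generated by the sets `U_{p,ε}`. -/
def topEP : TopologicalSpace (TotalP Y P) := TopologicalSpace.generateFrom (basisP Y P)

/-- The continuous sections of `E_P` vanishing at infinity. -/
def C0SectionsP : Set ((y : Y) → Fib Y P y) :=
  {F | @Continuous Y (TotalP Y P) _ (topEP Y P) (fun y => ⟨y, F y⟩) ∧
    Tendsto (fun y => fibNormQ Y P y (F y)) (cocompact Y) (nhds 0)}

/-- The section `p̂` associated to `p ∈ P`. -/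
def hatSec (p : P) : (y : Y) → Fib Y P y := fun y => fibMk Y P y p

/-- Transport between fibers of `E_P` over equal base points. -/
def fcast {y z : Y} (h : y = z) : Fib Y P y → Fib Y P z := fun v => h ▸ v


variable (Y : Type) [TopologicalSpace Y]

/-- A second countable locally compact Hausdorff proper topological groupoid with unit
space `Y`.  Multiplication is recorded as a total map which is only constrained on
composable pairs. -/
structure LCGroupoid where
  G : Type
  [topG : TopologicalSpace G]
  [t2G : T2Space G]
  [lcG : LocallyCompactSpace G]
  [scG : SecondCountableTopology G]
  [mG : MeasurableSpace G]
  [bG : BorelSpace G]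
  r : G → Y
  s : G → Y
  unit : Y → G
  mul : G → G → G
  inv : G → G
  unit_embedding : Topology.IsEmbedding unit
  r_unit : ∀ y, r (unit y) = y
  s_unit : ∀ y, s (unit y) = y
  r_cont : Continuous r
  s_cont : Continuous s
  inv_cont : Continuous inv
  mul_cont : Continuous fun p : {p : G × G // s p.1 = r p.2} => mul p.1.1 p.1.2
  r_mul : ∀ g h, s g = r h → r (mul g h) = r g
  s_mul : ∀ g h, s g = r h → s (mul g h) = s h
  mul_assoc : ∀ g h k, s g = r h → s h = r k → mul (mul g h) k = mul g (mul h k)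
  mul_unit : ∀ g, mul g (unit (s g)) = g
  unit_mul : ∀ g, mul (unit (r g)) g = g
  r_inv : ∀ g, r (inv g) = s g
  s_inv : ∀ g, s (inv g) = r g
  mul_inv : ∀ g, mul g (inv g) = unit (r g)
  inv_mul : ∀ g, mul (inv g) g = unit (s g)
  proper : IsProperMap fun g => (r g, s g)

attribute [instance] LCGroupoid.topG LCGroupoid.t2G LCGroupoid.lcG LCGroupoid.scG
  LCGroupoid.mG LCGroupoid.bG

variable (Gp : LCGroupoid Y)

/-- A left Haar system `{λ^y}` for the groupoid `Gp`:  `λ^y` is a Radon-type measure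
concentrated on `G^y = r⁻¹(y)` with support `G^y`, varying continuously, and
left invariant. -/
structure HaarSystem where
  lam : Y → MeasureTheory.Measure Gp.G
  concentrated : ∀ y, lam y ((Gp.r ⁻¹' {y})ᶜ) = 0
  full : ∀ (y : Y) (U : Set Gp.G), IsOpen U → (U ∩ Gp.r ⁻¹' {y}).Nonempty → lam y U ≠ 0
  finiteOnCompacts : ∀ (y : Y) (K : Set Gp.G), IsCompact K → lam y K ≠ ⊤
  integral_continuous : ∀ F : Gp.G → ℂ, Continuous F → HasCompactSupport F →
    Continuous fun y => ∫ g, F g ∂(lam y)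
  left_invariant : ∀ (g₀ : Gp.G) (F : Gp.G → ℂ), Continuous F → HasCompactSupport F →
    ∫ g, F (Gp.mul g₀ g) ∂(lam (Gp.s g₀)) = ∫ g, F g ∂(lam (Gp.r g₀))

/-- Continuous compactly supported functions on the groupoid `Gp`. -/
def CcFun : Type := {F : Gp.G → ℂ // Continuous F ∧ HasCompactSupport F}


section GroupoidActions

variable {Y : Type} [TopologicalSpace Y] (Gp : LCGroupoid Y)
variable (P : Type) [NormedAddCommGroup P] [NormedSpace ℂ P] [HilbertCzeroModule Y P]

/-- A continuous, unitary left action of the groupoid `Gp` on the Hilbert bundle `E_P`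
associated to the Hilbert `C₀(Y)`-module `P`: this is the datum making `P` a
`G`-Hilbert module. -/
structure GAction where
  act : (g : Gp.G) → Fib Y P (Gp.s g) → Fib Y P (Gp.r g)
  act_add : ∀ (g : Gp.G) (v w : Fib Y P (Gp.s g)), act g (v + w) = act g v + act g w
  act_csmul : ∀ (g : Gp.G) (c : ℂ) (v : Fib Y P (Gp.s g)), act g (c • v) = c • act g v
  act_norm : ∀ (g : Gp.G) (v : Fib Y P (Gp.s g)),
    fibNormQ Y P (Gp.r g) (act g v) = fibNormQ Y P (Gp.s g) v
  act_surjective : ∀ g : Gp.G, Function.Surjective (act g)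
  act_unit : ∀ (y : Y) (v : Fib Y P y),
    act (Gp.unit y) (fcast Y P (Gp.s_unit y).symm v) = fcast Y P (Gp.r_unit y).symm v
  act_mul : ∀ (g h : Gp.G) (hc : Gp.s g = Gp.r h) (v : Fib Y P (Gp.s h)),
    act (Gp.mul g h) (fcast Y P (Gp.s_mul g h hc).symm v) =
      fcast Y P (Gp.r_mul g h hc).symm (act g (fcast Y P hc.symm (act h v)))
  act_cont : @Continuous {q : Gp.G × TotalP Y P // Gp.s q.1 = q.2.1} (TotalP Y P)
    (@instTopologicalSpaceSubtype _ _ (@instTopologicalSpaceProd _ _ _ (topEP Y P)))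
    (topEP Y P)
    (fun q => ⟨Gp.r q.1.1, act q.1.1 (fcast Y P q.2.symm q.1.2.2)⟩)

variable {Gp P}
variable {Q : Type} [NormedAddCommGroup Q] [NormedSpace ℂ Q] [HilbertCzeroModule Y Q]

/-- A `G`-equivariant unitary isomorphism of `G`-Hilbert modules:  a bijective,
`ℂ`-linear, `C₀(Y)`-linear, inner-product preserving map intertwining the `G`-actions
on the associated Hilbert bundles. -/
def IsGEquivariantUnitary (T : P → Q) (AP : GAction Gp P) (AQ : GAction Gp Q) : Prop :=
  Function.Bijective T ∧
  (∀ p p' : P, T (p + p') = T p + T p') ∧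
  (∀ (c : ℂ) (p : P), T (c • p) = c • T p) ∧
  (∀ (p : P) (f : C₀(Y, ℂ)), T (modSMul Y p f) = modSMul Y (T p) f) ∧
  (∀ p p' : P, modIP Y (T p) (T p') = modIP Y p p') ∧
  (∀ (g : Gp.G) (p p' : P),
      AP.act g (fibMk Y P (Gp.s g) p) = fibMk Y P (Gp.r g) p' →
      AQ.act g (fibMk Y Q (Gp.s g) (T p)) = fibMk Y Q (Gp.r g) (T p'))

/-- Equivalence of `G`-Hilbert modules: existence of a `G`-equivariant unitary. -/
def GEquiv (AP : GAction Gp P) (AQ : GAction Gp Q) : Prop :=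
  ∃ T : P → Q, IsGEquivariantUnitary T AP AQ

end GroupoidActions

section ModuleConstructions

variable {Y : Type} [TopologicalSpace Y] (Gp : LCGroupoid Y)

/-- Data exhibiting a Hilbert `C₀(Y)`-module `PG` as the completion `P_G` of the
pre-Hilbert `C₀(Y)`-module `C_c(G)`, with module action `F·f = F·(f∘r)` and inner
product `⟨F₁,F₂⟩(y) = ∫_{G^y} conj F₁ · F₂ dλ^y`. -/
structure PGData (hs : HaarSystem Y Gp) (PG : Type) [NormedAddCommGroup PG]
    [NormedSpace ℂ PG] [HilbertCzeroModule Y PG] where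
  emb : CcFun Y Gp → PG
  emb_add : ∀ F₁ F₂ F₃ : CcFun Y Gp, F₃.1 = F₁.1 + F₂.1 → emb F₃ = emb F₁ + emb F₂
  emb_csmul : ∀ (c : ℂ) (F₁ F₃ : CcFun Y Gp), F₃.1 = c • F₁.1 → emb F₃ = c • emb F₁
  emb_msmul : ∀ (F₁ F₃ : CcFun Y Gp) (f : C₀(Y, ℂ)),
    F₃.1 = (fun g => F₁.1 g * f (Gp.r g)) → emb F₃ = modSMul Y (emb F₁) f
  emb_inner : ∀ (F₁ F₂ : CcFun Y Gp) (y : Y),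
    modIP Y (emb F₁) (emb F₂) y = ∫ g, conj (F₁.1 g) * F₂.1 g ∂(hs.lam y)
  emb_dense : ∀ (p : PG) (ε : ℝ), 0 < ε → ∃ F : CcFun Y Gp, ‖p - emb F‖ < ε

variable {Gp}

/-- The natural left translation action of `G` on `L²(G) = E_{P_G}`, characterized on
the dense image of `C_c(G)` by `(g·ξ)(h) = ξ(g⁻¹h)` for `h ∈ G^{r(g)}`. -/
def IsNaturalPGAction {hs : HaarSystem Y Gp} {PG : Type} [NormedAddCommGroup PG]
    [NormedSpace ℂ PG] [HilbertCzeroModule Y PG] (d : PGData Gp hs PG)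
    (A : GAction Gp PG) : Prop :=
  ∀ (g : Gp.G) (F F' : CcFun Y Gp),
    (∀ h : Gp.G, Gp.r h = Gp.r g → F'.1 h = F.1 (Gp.mul (Gp.inv g) h)) →
    A.act g (fibMk Y PG (Gp.s g) (d.emb F)) = fibMk Y PG (Gp.r g) (d.emb F')

end ModuleConstructions

section TensorSum

/-- Data exhibiting `R` as the interior tensor product `P ⊗_{C₀(Y)} Q` of two Hilbert
`C₀(Y)`-modules: a balanced bilinear map with dense span satisfying
`⟨p₁⊗q₁, p₂⊗q₂⟩ = ⟨p₁,p₂⟩⟨q₁,q₂⟩`. -/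
structure TensorData (Y : Type) [TopologicalSpace Y] (P Q R : Type)
    [NormedAddCommGroup P] [NormedSpace ℂ P] [HilbertCzeroModule Y P]
    [NormedAddCommGroup Q] [NormedSpace ℂ Q] [HilbertCzeroModule Y Q]
    [NormedAddCommGroup R] [NormedSpace ℂ R] [HilbertCzeroModule Y R] where
  t : P → Q → R
  t_add_left : ∀ (p p' : P) (q : Q), t (p + p') q = t p q + t p' q
  t_add_right : ∀ (p : P) (q q' : Q), t p (q + q') = t p q + t p q'
  t_csmul_left : ∀ (c : ℂ) (p : P) (q : Q), t (c • p) q = c • t p q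
  t_csmul_right : ∀ (c : ℂ) (p : P) (q : Q), t p (c • q) = c • t p q
  t_msmul_left : ∀ (p : P) (q : Q) (f : C₀(Y, ℂ)), t (modSMul Y p f) q = modSMul Y (t p q) f
  t_msmul_right : ∀ (p : P) (q : Q) (f : C₀(Y, ℂ)), t p (modSMul Y q f) = modSMul Y (t p q) f
  t_inner : ∀ (p p' : P) (q q' : Q),
    modIP Y (t p q) (t p' q') = modIP Y p p' * modIP Y q q'
  t_dense : ∀ (x : R) (ε : ℝ), 0 < ε →
    ∃ (n : ℕ) (ps : Fin n → P) (qs : Fin n → Q), ‖x - ∑ i, t (ps i) (qs i)‖ < ε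

/-- Data exhibiting `S` as the Hilbert `C₀(Y)`-module direct sum `P ⊕ Q`. -/
structure SumData (Y : Type) [TopologicalSpace Y] (P Q S : Type)
    [NormedAddCommGroup P] [NormedSpace ℂ P] [HilbertCzeroModule Y P]
    [NormedAddCommGroup Q] [NormedSpace ℂ Q] [HilbertCzeroModule Y Q]
    [NormedAddCommGroup S] [NormedSpace ℂ S] [HilbertCzeroModule Y S] where
  inl : P → S
  inr : Q → S
  inl_add : ∀ p p' : P, inl (p + p') = inl p + inl p'
  inr_add : ∀ q q' : Q, inr (q + q') = inr q + inr q'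
  inl_csmul : ∀ (c : ℂ) (p : P), inl (c • p) = c • inl p
  inr_csmul : ∀ (c : ℂ) (q : Q), inr (c • q) = c • inr q
  inl_msmul : ∀ (p : P) (f : C₀(Y, ℂ)), inl (modSMul Y p f) = modSMul Y (inl p) f
  inr_msmul : ∀ (q : Q) (f : C₀(Y, ℂ)), inr (modSMul Y q f) = modSMul Y (inr q) f
  inner_ll : ∀ p p' : P, modIP Y (inl p) (inl p') = modIP Y p p'
  inner_rr : ∀ q q' : Q, modIP Y (inr q) (inr q') = modIP Y q q'
  inner_lr : ∀ (p : P) (q : Q), modIP Y (inl p) (inr q) = 0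
  total : ∀ x : S, ∃ (p : P) (q : Q), x = inl p + inr q

/-- Data exhibiting `S` as the Hilbert `C₀(Y)`-module direct sum `⊕_{i=1}^∞ P i` of a
sequence of Hilbert `C₀(Y)`-modules: the module of sequences `{p_i}`, `p_i ∈ P i`, with
`Σ_i ⟨p_i,p_i⟩` convergent in `C₀(Y)`. -/
structure InftySumData (Y : Type) [TopologicalSpace Y] (Pf : ℕ → Type) (S : Type)
    [∀ i, NormedAddCommGroup (Pf i)] [∀ i, NormedSpace ℂ (Pf i)]
    [∀ i, HilbertCzeroModule Y (Pf i)]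
    [NormedAddCommGroup S] [NormedSpace ℂ S] [HilbertCzeroModule Y S] where
  proj : (i : ℕ) → S → Pf i
  proj_add : ∀ (i : ℕ) (x x' : S), proj i (x + x') = proj i x + proj i x'
  proj_csmul : ∀ (i : ℕ) (c : ℂ) (x : S), proj i (c • x) = c • proj i x
  proj_msmul : ∀ (i : ℕ) (x : S) (f : C₀(Y, ℂ)),
    proj i (modSMul Y x f) = modSMul Y (proj i x) f
  proj_inner : ∀ x x' : S, HasSum (fun i => modIP Y (proj i x) (proj i x')) (modIP Y x x')
  proj_injective : ∀ x x' : S, (∀ i, proj i x = proj i x') → x = x'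
  proj_surjective : ∀ u : (i : ℕ) → Pf i, Summable (fun i => modIP Y (u i) (u i)) →
    ∃ x : S, ∀ i, proj i x = u i

variable {Y : Type} [TopologicalSpace Y] {Gp : LCGroupoid Y}
variable {P Q R S : Type}
  [NormedAddCommGroup P] [NormedSpace ℂ P] [HilbertCzeroModule Y P]
  [NormedAddCommGroup Q] [NormedSpace ℂ Q] [HilbertCzeroModule Y Q]
  [NormedAddCommGroup R] [NormedSpace ℂ R] [HilbertCzeroModule Y R]
  [NormedAddCommGroup S] [NormedSpace ℂ S] [HilbertCzeroModule Y S]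

/-- The diagonal `G`-action on a tensor product `P ⊗_{C₀(Y)} Q`. -/
def IsDiagonalAction (td : TensorData Y P Q R) (AP : GAction Gp P) (AQ : GAction Gp Q)
    (AR : GAction Gp R) : Prop :=
  ∀ (g : Gp.G) (p p' : P) (q q' : Q),
    AP.act g (fibMk Y P (Gp.s g) p) = fibMk Y P (Gp.r g) p' →
    AQ.act g (fibMk Y Q (Gp.s g) q) = fibMk Y Q (Gp.r g) q' →
    AR.act g (fibMk Y R (Gp.s g) (td.t p q)) = fibMk Y R (Gp.r g) (td.t p' q')

/-- The coordinatewise `G`-action on a direct sum `P ⊕ Q`. -/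
def IsCoordinateSumAction (sd : SumData Y P Q S) (AP : GAction Gp P) (AQ : GAction Gp Q)
    (AS : GAction Gp S) : Prop :=
  (∀ (g : Gp.G) (p p' : P),
    AP.act g (fibMk Y P (Gp.s g) p) = fibMk Y P (Gp.r g) p' →
    AS.act g (fibMk Y S (Gp.s g) (sd.inl p)) = fibMk Y S (Gp.r g) (sd.inl p')) ∧
  (∀ (g : Gp.G) (q q' : Q),
    AQ.act g (fibMk Y Q (Gp.s g) q) = fibMk Y Q (Gp.r g) q' →
    AS.act g (fibMk Y S (Gp.s g) (sd.inr q)) = fibMk Y S (Gp.r g) (sd.inr q'))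

/-- The coordinatewise `G`-action on an infinite direct sum `⊕_{i=1}^∞ P i`. -/
def IsCoordinateInftyAction {Pf : ℕ → Type} [∀ i, NormedAddCommGroup (Pf i)]
    [∀ i, NormedSpace ℂ (Pf i)] [∀ i, HilbertCzeroModule Y (Pf i)]
    (d : InftySumData Y Pf S) (Af : (i : ℕ) → GAction Gp (Pf i))
    (AS : GAction Gp S) : Prop :=
  ∀ (g : Gp.G) (x x' : S),
    AS.act g (fibMk Y S (Gp.s g) x) = fibMk Y S (Gp.r g) x' →
    ∀ i, (Af i).act g (fibMk Y (Pf i) (Gp.s g) (d.proj i x)) =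
      fibMk Y (Pf i) (Gp.r g) (d.proj i x')

end TensorSum

/-! The evaluation `⟨p, q⟩(y)` is a positive semidefinite hermitian form on `P`, so its square
root `N_y` is a seminorm; it kills `I_y P`, hence induces the norm of `P_y`, and it is continuous
in `y`, vanishes at infinity and is dominated by `‖·‖`. By the triangle inequality in the fibers,
every basic set `U_{q,ε}` containing `p̂(y)` contains a basic set centred at `p̂`; this gives the
basis property and an explicit neighbourhood basis of each point. All continuity statements then
reduce to triangle inequalities in the fibers together with the continuity of `y ↦ N_y(p)`, and a
countable base of `Y` with a countable dense subset of `P` yields a countable base of `E_P`, since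
`N_y(p - q) ≤ ‖p - q‖`. -/

section FiberSeminorm

variable {Y : Type} [TopologicalSpace Y] {P : Type} [NormedAddCommGroup P] [NormedSpace ℂ P]
  [HilbertCzeroModule Y P]

lemma modIP_apply_conj (y : Y) (p q : P) : conj (modIP Y q p y) = modIP Y p q y := by
  unfold modIP
  rw [HilbertCzeroModule.minner_conj p q, ZeroAtInftyContinuousMap.star_apply]
  rfl

variable (Y P) in
abbrev pointInnerCore (y : Y) : PreInnerProductSpace.Core ℂ P where
  inner p q := modIP Y p q y
  conj_inner_symm p q := modIP_apply_conj y p q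
  re_inner_nonneg p := HilbertCzeroModule.minner_self_re_nonneg p y
  add_left p q r := by
    show modIP Y (p + q) r y = modIP Y p r y + modIP Y q r y
    rw [← modIP_apply_conj y (p + q), ← modIP_apply_conj y p, ← modIP_apply_conj y q, ← map_add]
    simp only [modIP, HilbertCzeroModule.minner_add_right, ZeroAtInftyContinuousMap.add_apply]
  smul_left p q c := by
    show modIP Y (c • p) q y = conj c * modIP Y p q y
    rw [← modIP_apply_conj y (c • p), ← modIP_apply_conj y p, ← map_mul]
    simp only [modIP, HilbertCzeroModule.minner_csmul_right, ZeroAtInftyContinuousMap.smul_apply,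
      smul_eq_mul]

variable (Y P) in
/-- The triangle inequality is Cauchy–Schwarz for `pointInnerCore`, whose norm is `fibNormRep`;
the local `Norm` instance makes the core's lemmas refer to that norm rather than to `‖·‖` on `P`. -/
def pointSeminorm (y : Y) : Seminorm ℂ P :=
  letI : Norm P := InnerProductSpace.Core.toNorm (c := pointInnerCore Y P y)
  Seminorm.of (fibNormRep Y P y)
    (InnerProductSpace.Core.toSeminormedSpaceCore (pointInnerCore Y P y)).norm_triangle
    (InnerProductSpace.Core.toSeminormedSpaceCore (pointInnerCore Y P y)).norm_smul

lemma pointSeminorm_apply (y : Y) (p : P) :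
    pointSeminorm Y P y p = √(modIP Y p p y).re := rfl

lemma continuous_pointSeminorm (p : P) : Continuous fun y => pointSeminorm Y P y p :=
  Real.continuous_sqrt.comp (Complex.continuous_re.comp (modIP Y p p).continuous)

lemma tendsto_pointSeminorm_cocompact (p : P) :
    Tendsto (fun y => pointSeminorm Y P y p) (cocompact Y) (𝓝 0) := by
  simpa [Function.comp_def, pointSeminorm_apply] using
    ((Real.continuous_sqrt.comp Complex.continuous_re).tendsto 0).comp (zero_at_infty (modIP Y p p))

lemma pointSeminorm_le_norm (y : Y) (p : P) : pointSeminorm Y P y p ≤ ‖p‖ := by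
  rw [pointSeminorm_apply, HilbertCzeroModule.norm_eq (Y := Y) p]
  refine Real.sqrt_le_sqrt ((Complex.re_le_norm _).trans ?_)
  exact (BoundedContinuousFunction.norm_coe_le_norm (modIP Y p p).toBCF y).trans_eq
    ZeroAtInftyContinuousMap.norm_toBCF_eq_norm

lemma modIP_apply_eq_zero_of_mem_fiberIdeal {y : Y} {m : P} (hm : m ∈ fiberIdeal Y P y)
    (p : P) : modIP Y p m y = 0 := by
  induction hm using Submodule.span_induction with
  | mem x hx =>
    obtain ⟨f, q, hf, rfl⟩ := hx
    simp [modSMul, modIP, HilbertCzeroModule.minner_msmul_right, hf]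
  | zero =>
    have h := HilbertCzeroModule.minner_csmul_right (Y := Y) (0 : ℂ) p 0
    rw [zero_smul, zero_smul] at h
    rw [modIP, h, ZeroAtInftyContinuousMap.zero_apply]
  | add a b _ _ ha hb =>
    simp only [modIP, HilbertCzeroModule.minner_add_right, ZeroAtInftyContinuousMap.add_apply] at *
    rw [ha, hb, add_zero]
  | smul c a _ h =>
    simp only [modIP, HilbertCzeroModule.minner_csmul_right,
      ZeroAtInftyContinuousMap.smul_apply] at *
    rw [h, smul_zero]

lemma pointSeminorm_eq_zero_of_mem_fiberIdeal {y : Y} {m : P} (hm : m ∈ fiberIdeal Y P y) :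
    pointSeminorm Y P y m = 0 := by
  simp [pointSeminorm_apply, modIP_apply_eq_zero_of_mem_fiberIdeal hm]

lemma fibMk_surjective (y : Y) : Function.Surjective (fibMk Y P y) :=
  Submodule.Quotient.mk_surjective _

lemma fibNormQ_mk (y : Y) (p : P) : fibNormQ Y P y (fibMk Y P y p) = pointSeminorm Y P y p := by
  have hreps : {r | ∃ q : P, fibMk Y P y p = fibMk Y P y q ∧ r = pointSeminorm Y P y q} =
      {pointSeminorm Y P y p} := by
    refine Set.eq_singleton_iff_unique_mem.mpr ⟨⟨p, rfl, rfl⟩, ?_⟩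
    rintro _ ⟨q, hpq, rfl⟩
    have hm : q - p ∈ fiberIdeal Y P y := by
      rw [← Submodule.neg_mem_iff, neg_sub]
      exact (Submodule.Quotient.eq _).mp hpq
    have := abs_sub_map_le_sub (pointSeminorm Y P y) q p
    rw [pointSeminorm_eq_zero_of_mem_fiberIdeal hm] at this
    linarith [abs_nonpos_iff.mp this]
  exact (congrArg sInf hreps).trans (csInf_singleton _)

lemma fibNormQ_mk_sub (y : Y) (a b : P) :
    fibNormQ Y P y (fibMk Y P y a - fibMk Y P y b) = pointSeminorm Y P y (a - b) :=
  fibNormQ_mk y (a - b)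

variable (Y P) in
def fiberSeminorm (y : Y) : Seminorm ℂ (Fib Y P y) :=
  Seminorm.of (fibNormQ Y P y)
    (fun h k => by
      obtain ⟨a, rfl⟩ := fibMk_surjective y h
      obtain ⟨b, rfl⟩ := fibMk_surjective y k
      show fibNormQ Y P y (fibMk Y P y (a + b)) ≤ _
      rw [fibNormQ_mk, fibNormQ_mk, fibNormQ_mk]
      exact map_add_le_add _ a b)
    (fun c h => by
      obtain ⟨a, rfl⟩ := fibMk_surjective y h
      show fibNormQ Y P y (fibMk Y P y (c • a)) = _
      rw [fibNormQ_mk, fibNormQ_mk]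
      exact map_smul_eq_mul _ c a)

lemma fiberSeminorm_apply (y : Y) (h : Fib Y P y) : fiberSeminorm Y P y h = fibNormQ Y P y h :=
  rfl

lemma fibNormQ_sub_mk_le {y : Y} (k : Fib Y P y) (a d : P) :
    fibNormQ Y P y (k - fibMk Y P y a) ≤
      fibNormQ Y P y (k - fibMk Y P y d) + pointSeminorm Y P y (d - a) := by
  rw [← fibNormQ_mk_sub, ← fiberSeminorm_apply, ← fiberSeminorm_apply, ← fiberSeminorm_apply,
    ← sub_add_sub_cancel k (fibMk Y P y d)]
  exact map_add_le_add _ _ _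

lemma fibNormQ_add_sub_mk_le {y : Y} (h k : Fib Y P y) (a b : P) :
    fibNormQ Y P y (h + k - fibMk Y P y (a + b)) ≤
      fibNormQ Y P y (h - fibMk Y P y a) + fibNormQ Y P y (k - fibMk Y P y b) := by
  simp only [← fiberSeminorm_apply]
  rw [show h + k - fibMk Y P y (a + b) = (h - fibMk Y P y a) + (k - fibMk Y P y b) by
    rw [show fibMk Y P y (a + b) = fibMk Y P y a + fibMk Y P y b from rfl]; abel]
  exact map_add_le_add _ _ _

lemma fibNormQ_smul_sub_mk_le {y : Y} (k : Fib Y P y) (c c' : ℂ) (a : P) :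
    fibNormQ Y P y (c' • k - fibMk Y P y (c • a)) ≤
      ‖c'‖ * fibNormQ Y P y (k - fibMk Y P y a) + ‖c' - c‖ * pointSeminorm Y P y a := by
  rw [← fibNormQ_mk, ← fiberSeminorm_apply, ← fiberSeminorm_apply, ← fiberSeminorm_apply,
    ← map_smul_eq_mul, ← map_smul_eq_mul]
  refine (map_add_le_add _ _ _).trans_eq' (congrArg _ ?_)
  rw [show fibMk Y P y (c • a) = c • fibMk Y P y a from rfl, smul_sub, sub_smul]
  abel

lemma abs_fibNormQ_sub_sub_le {y : Y} (k l : Fib Y P y) (a r : P) :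
    |fibNormQ Y P y (k - l) - pointSeminorm Y P y (a - r)| ≤
      fibNormQ Y P y (k - fibMk Y P y a) + fibNormQ Y P y (l - fibMk Y P y r) := by
  rw [← fibNormQ_mk_sub]
  simp only [← fiberSeminorm_apply]
  calc _ ≤ fiberSeminorm Y P y (k - l - (fibMk Y P y a - fibMk Y P y r)) :=
        abs_sub_map_le_sub _ _ _
    _ = fiberSeminorm Y P y ((k - fibMk Y P y a) - (l - fibMk Y P y r)) := by
        congr 1; abel
    _ ≤ _ := map_sub_le_add _ _ _

end FiberSeminorm

section BundleTopology

open TopologicalSpace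

variable {Y : Type} [TopologicalSpace Y] {P : Type} [NormedAddCommGroup P] [NormedSpace ℂ P]
  [HilbertCzeroModule Y P]

local instance : TopologicalSpace (TotalP Y P) := topEP Y P

def tube (U : Set Y) (F : (y : Y) → Fib Y P y) (ε : ℝ) : Set (TotalP Y P) :=
  {e | e.1 ∈ U ∧ fibNormQ Y P e.1 (e.2 - F e.1) < ε}

lemma tube_mono {U V : Set Y} {F : (y : Y) → Fib Y P y} {ε δ : ℝ} (hUV : U ⊆ V) (hεδ : ε ≤ δ) :
    tube U F ε ⊆ tube V F δ :=
  fun _ he => ⟨hUV he.1, he.2.trans_le hεδ⟩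

lemma mk_mem_tube_hatSec {U : Set Y} {y : Y} {ε : ℝ} (a : P) (hy : y ∈ U) (hε : 0 < ε) :
    (⟨y, fibMk Y P y a⟩ : TotalP Y P) ∈ tube U (hatSec Y P a) ε := by
  refine ⟨hy, ?_⟩
  show fibNormQ Y P y (fibMk Y P y a - fibMk Y P y a) < ε
  rwa [fibNormQ_mk_sub, sub_self, map_zero]

lemma tube_hatSec_mem_basisP {U : Set Y} {p : P} {ε : ℝ} (hU : IsOpen U) (hε : 0 < ε) :
    tube U (hatSec Y P p) ε ∈ basisP Y P :=
  ⟨U, p, ε, hU, hε, rfl⟩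

lemma isOpen_tube_hatSec {U : Set Y} {p : P} {ε : ℝ} (hU : IsOpen U) (hε : 0 < ε) :
    IsOpen (tube U (hatSec Y P p) ε) :=
  TopologicalSpace.isOpen_generateFrom_of_mem (tube_hatSec_mem_basisP hU hε)

lemma exists_tube_subset_tube {U : Set Y} {y : Y} {a q : P} {ε : ℝ} (hU : IsOpen U)
    (h : ⟨y, fibMk Y P y a⟩ ∈ tube U (hatSec Y P q) ε) :
    ∃ V : Set Y, IsOpen V ∧ y ∈ V ∧
      ∃ δ > 0, tube V (hatSec Y P a) δ ⊆ tube U (hatSec Y P q) ε := by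
  obtain ⟨hyU, hlt⟩ := h
  have hd : pointSeminorm Y P y (a - q) < ε := (fibNormQ_mk_sub y a q).symm.trans_lt hlt
  obtain ⟨η, hη, hdη⟩ : ∃ η > 0, pointSeminorm Y P y (a - q) + η < ε :=
    ⟨(ε - pointSeminorm Y P y (a - q)) / 2, by linarith, by linarith⟩
  refine ⟨U ∩ {z | pointSeminorm Y P z (a - q) + η < ε},
    hU.inter (isOpen_lt ((continuous_pointSeminorm _).add continuous_const) continuous_const),
    ⟨hyU, hdη⟩, η, hη, ?_⟩
  rintro ⟨z, k⟩ ⟨⟨hzU, hz⟩, hk⟩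
  refine ⟨hzU, ?_⟩
  have hz' : pointSeminorm Y P z (a - q) + η < ε := hz
  have hk' : fibNormQ Y P z (k - fibMk Y P z a) < η := hk
  show fibNormQ Y P z (k - fibMk Y P z q) < ε
  linarith [fibNormQ_sub_mk_le k q a]

variable (Y P) in
lemma isTopologicalBasis_basisP : IsTopologicalBasis (basisP Y P) := by
  refine ⟨?_, ?_, rfl⟩
  · rintro _ ⟨U₁, p₁, ε₁, hU₁, -, rfl⟩ _ ⟨U₂, p₂, ε₂, hU₂, -, rfl⟩ ⟨y, h⟩ hx
    obtain ⟨a, rfl⟩ := fibMk_surjective y h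
    obtain ⟨V₁, hV₁, hyV₁, δ₁, hδ₁, h₁⟩ := exists_tube_subset_tube hU₁ hx.1
    obtain ⟨V₂, hV₂, hyV₂, δ₂, hδ₂, h₂⟩ := exists_tube_subset_tube hU₂ hx.2
    have hδ : 0 < min δ₁ δ₂ := lt_min hδ₁ hδ₂
    exact ⟨tube (V₁ ∩ V₂) (hatSec Y P a) (min δ₁ δ₂), tube_hatSec_mem_basisP (hV₁.inter hV₂) hδ,
      mk_mem_tube_hatSec a ⟨hyV₁, hyV₂⟩ hδ,
      Set.subset_inter ((tube_mono Set.inter_subset_left (min_le_left _ _)).trans h₁)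
        ((tube_mono Set.inter_subset_right (min_le_right _ _)).trans h₂)⟩
  · refine Set.eq_univ_of_forall fun ⟨y, h⟩ => ?_
    obtain ⟨a, rfl⟩ := fibMk_surjective y h
    exact ⟨_, tube_hatSec_mem_basisP isOpen_univ one_pos, mk_mem_tube_hatSec a trivial one_pos⟩

lemma hasBasis_nhds_mk (y : Y) (a : P) :
    (𝓝 (⟨y, fibMk Y P y a⟩ : TotalP Y P)).HasBasis
      (fun Vδ : Set Y × ℝ => IsOpen Vδ.1 ∧ y ∈ Vδ.1 ∧ 0 < Vδ.2)
      fun Vδ => tube Vδ.1 (hatSec Y P a) Vδ.2 := by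
  refine (isTopologicalBasis_basisP Y P).nhds_hasBasis.to_hasBasis ?_ ?_
  · rintro _ ⟨⟨U, q, ε, hU, -, rfl⟩, hx⟩
    obtain ⟨V, hV, hyV, δ, hδ, hsub⟩ := exists_tube_subset_tube hU hx
    exact ⟨(V, δ), ⟨hV, hyV, hδ⟩, hsub⟩
  · rintro ⟨V, δ⟩ ⟨hV, hyV, hδ⟩
    exact ⟨_, ⟨tube_hatSec_mem_basisP hV hδ, mk_mem_tube_hatSec a hyV hδ⟩, subset_rfl⟩

lemma continuous_totalP_fst : Continuous (Sigma.fst : TotalP Y P → Y) := by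
  refine continuous_iff_continuousAt.mpr fun ⟨y, h⟩ => ?_
  obtain ⟨a, rfl⟩ := fibMk_surjective y h
  exact ((hasBasis_nhds_mk y a).tendsto_iff (nhds_basis_opens y)).mpr
    fun V ⟨hyV, hV⟩ => ⟨(V, 1), ⟨hV, hyV, one_pos⟩, fun _ he => he.1⟩

lemma continuous_hatSec (p : P) : Continuous fun y => (⟨y, hatSec Y P p y⟩ : TotalP Y P) := by
  refine continuous_generateFrom_iff.mpr ?_
  rintro _ ⟨U, q, ε, hU, -, rfl⟩
  show IsOpen {z | z ∈ U ∧ fibNormQ Y P z (fibMk Y P z p - fibMk Y P z q) < ε}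
  simp only [fibNormQ_mk_sub]
  exact hU.inter (isOpen_lt (continuous_pointSeminorm _) continuous_const)

lemma hatSec_mem_C0SectionsP (p : P) : hatSec Y P p ∈ C0SectionsP Y P :=
  ⟨continuous_hatSec p, by simpa [hatSec, fibNormQ_mk] using tendsto_pointSeminorm_cocompact p⟩

lemma continuous_fibNormQ_sub_section {F : (y : Y) → Fib Y P y}
    (hF : Continuous fun y => (⟨y, F y⟩ : TotalP Y P)) :
    Continuous fun e : TotalP Y P => fibNormQ Y P e.1 (e.2 - F e.1) := by
  refine continuous_iff_continuousAt.mpr fun ⟨y, h⟩ => ?_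
  obtain ⟨a, rfl⟩ := fibMk_surjective y h
  obtain ⟨r, hr⟩ := fibMk_surjective y (F y)
  refine Metric.tendsto_nhds.mpr fun ε hε => ?_
  have hε3 : 0 < ε / 3 := by positivity
  let W := (fun z => (⟨z, F z⟩ : TotalP Y P)) ⁻¹' tube Set.univ (hatSec Y P r) (ε / 3) ∩
    {z | dist (pointSeminorm Y P z (a - r)) (pointSeminorm Y P y (a - r)) < ε / 3}
  have hW : IsOpen W := (hF.isOpen_preimage _ (isOpen_tube_hatSec isOpen_univ hε3)).inter
    (isOpen_lt ((continuous_pointSeminorm _).dist continuous_const) continuous_const)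
  have hyW : y ∈ W := by
    refine ⟨?_, by simpa using hε3⟩
    simpa [← hr] using mk_mem_tube_hatSec r (Set.mem_univ y) hε3
  filter_upwards [(hasBasis_nhds_mk y a).mem_of_mem (i := (W, ε / 3)) ⟨hW, hyW, hε3⟩]
  rintro ⟨z, k⟩ ⟨⟨⟨-, hFz⟩, hz⟩, hk⟩
  show dist (fibNormQ Y P z (k - F z)) (fibNormQ Y P y (fibMk Y P y a - F y)) < ε
  rw [← hr, fibNormQ_mk_sub]
  have hFz' : fibNormQ Y P z (F z - fibMk Y P z r) < ε / 3 := hFz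
  have hk' : fibNormQ Y P z (k - fibMk Y P z a) < ε / 3 := hk
  calc _ ≤ dist (fibNormQ Y P z (k - F z)) (pointSeminorm Y P z (a - r)) +
        dist (pointSeminorm Y P z (a - r)) (pointSeminorm Y P y (a - r)) := dist_triangle _ _ _
    _ < ε := by
        rw [Real.dist_eq]
        linarith [abs_fibNormQ_sub_sub_le k (F z) a r, hz.out]

lemma isOpen_tube {U : Set Y} {F : (y : Y) → Fib Y P y} {ε : ℝ} (hU : IsOpen U)
    (hF : Continuous fun y => (⟨y, F y⟩ : TotalP Y P)) : IsOpen (tube U F ε) :=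
  (hU.preimage continuous_totalP_fst).inter
    (isOpen_lt (continuous_fibNormQ_sub_section hF) continuous_const)

lemma continuous_fibNormQ_section {F : (y : Y) → Fib Y P y}
    (hF : Continuous fun y => (⟨y, F y⟩ : TotalP Y P)) :
    Continuous fun y => fibNormQ Y P y (F y) := by
  simpa [hatSec, fibMk, Function.comp_def] using
    (continuous_fibNormQ_sub_section (continuous_hatSec (0 : P))).comp hF

lemma continuous_fiberwise_add :
    Continuous fun e : {e : TotalP Y P × TotalP Y P // e.1.1 = e.2.1} =>
      (⟨e.1.1.1, e.1.1.2 + fcast Y P e.2.symm e.1.2.2⟩ : TotalP Y P) := by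
  refine continuous_iff_continuousAt.mpr ?_
  rintro ⟨⟨⟨y, h⟩, ⟨y', k⟩⟩, hyy' : y = y'⟩
  subst hyy'
  obtain ⟨a, rfl⟩ := fibMk_surjective y h
  obtain ⟨b, rfl⟩ := fibMk_surjective y k
  refine (hasBasis_nhds_mk y (a + b)).tendsto_right_iff.mpr ?_
  rintro ⟨V, δ⟩ ⟨hV, hyV, hδ⟩
  have hδ2 : 0 < δ / 2 := half_pos hδ
  have hpair := prod_mem_nhds ((hasBasis_nhds_mk y a).mem_of_mem (i := (V, δ / 2)) ⟨hV, hyV, hδ2⟩)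
    ((hasBasis_nhds_mk y b).mem_of_mem (i := (V, δ / 2)) ⟨hV, hyV, hδ2⟩)
  filter_upwards [continuous_subtype_val.continuousAt.preimage_mem_nhds hpair]
  rintro ⟨⟨⟨z, h'⟩, ⟨z', k'⟩⟩, hzz' : z = z'⟩ ⟨⟨hzV, hh⟩, -, hk⟩
  subst hzz'
  refine ⟨hzV, ?_⟩
  have hh' : fibNormQ Y P z (h' - fibMk Y P z a) < δ / 2 := hh
  have hk' : fibNormQ Y P z (k' - fibMk Y P z b) < δ / 2 := hk
  show fibNormQ Y P z (h' + k' - fibMk Y P z (a + b)) < δ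
  linarith [fibNormQ_add_sub_mk_le h' k' a b]

lemma continuous_fiberwise_smul :
    Continuous fun e : ℂ × TotalP Y P => (⟨e.2.1, e.1 • e.2.2⟩ : TotalP Y P) := by
  refine continuous_iff_continuousAt.mpr ?_
  rintro ⟨c, y, h⟩
  obtain ⟨a, rfl⟩ := fibMk_surjective y h
  refine (hasBasis_nhds_mk y (c • a)).tendsto_right_iff.mpr ?_
  rintro ⟨V, δ⟩ ⟨hV, hyV, hδ⟩
  set M := ‖c‖ + ‖a‖ + 1
  have hM : 0 < M := by positivity
  set η := min 1 (δ / (2 * M))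
  have hη : 0 < η := lt_min one_pos (by positivity)
  have hηM : η * M ≤ δ / 2 := by
    calc η * M ≤ δ / (2 * M) * M := by gcongr; exact min_le_right _ _
      _ = δ / 2 := by field_simp
  filter_upwards [prod_mem_nhds (Metric.ball_mem_nhds c hη)
    ((hasBasis_nhds_mk y a).mem_of_mem (i := (V, η)) ⟨hV, hyV, hη⟩)]
  rintro ⟨c', z, k⟩ ⟨hc', hzV, hk⟩
  refine ⟨hzV, ?_⟩
  have hc'c : ‖c' - c‖ < η := by rwa [← dist_eq_norm]
  have hc' : ‖c'‖ ≤ ‖c‖ + 1 := by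
    linarith [norm_le_norm_add_norm_sub' c' c, min_le_left 1 (δ / (2 * M))]
  have hk' : fibNormQ Y P z (k - fibMk Y P z a) < η := hk
  show fibNormQ Y P z (c' • k - fibMk Y P z (c • a)) < δ
  calc _ ≤ ‖c'‖ * fibNormQ Y P z (k - fibMk Y P z a) + ‖c' - c‖ * pointSeminorm Y P z a :=
        fibNormQ_smul_sub_mk_le k c c' a
    _ ≤ (‖c‖ + 1) * η + η * ‖a‖ := by
        gcongr
        · exact apply_nonneg (fiberSeminorm Y P z) _
        · exact pointSeminorm_le_norm z a
    _ = η * M := by ring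
    _ < δ := by linarith

variable (Y P) in
lemma secondCountableTopology_totalP [SecondCountableTopology Y] [SecondCountableTopology P] :
    SecondCountableTopology (TotalP Y P) := by
  obtain ⟨D, hDc, hDd⟩ := exists_countable_dense P
  obtain ⟨B, hBc, -, hB⟩ := exists_countable_basis Y
  let tubes : Set Y × P × ℕ → Set (TotalP Y P) := fun t =>
    tube t.1 (hatSec Y P t.2.1) (1 / (t.2.2 + 1))
  refine (isTopologicalBasis_of_isOpen_of_nhds (s := tubes '' (B ×ˢ D ×ˢ Set.univ)) ?_ ?_
    ).secondCountableTopology ((hBc.prod (hDc.prod Set.countable_univ)).image _)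
  · rintro _ ⟨⟨V, d, n⟩, ⟨hV, -, -⟩, rfl⟩
    exact isOpen_tube_hatSec (hB.isOpen hV) Nat.one_div_pos_of_nat
  · rintro ⟨y, h⟩ u hyu hu
    obtain ⟨a, rfl⟩ := fibMk_surjective y h
    obtain ⟨⟨V, δ⟩, ⟨hV, hyV, hδ⟩, hsub⟩ := (hasBasis_nhds_mk y a).mem_iff.mp (hu.mem_nhds hyu)
    obtain ⟨n, hn⟩ := exists_nat_one_div_lt (half_pos hδ)
    obtain ⟨W, hWB, hyW, hWV⟩ := hB.exists_subset_of_mem_open hyV hV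
    obtain ⟨d, hdD, hd⟩ := Metric.mem_closure_iff.mp (hDd a) _ (Nat.one_div_pos_of_nat (n := n))
    rw [dist_eq_norm] at hd
    refine ⟨tubes (W, d, n), ⟨(W, d, n), ⟨hWB, hdD, trivial⟩, rfl⟩, ⟨hyW, ?_⟩, ?_⟩
    · show fibNormQ Y P y (fibMk Y P y a - fibMk Y P y d) < 1 / (n + 1)
      rw [fibNormQ_mk_sub]
      exact (pointSeminorm_le_norm y _).trans_lt hd
    · rintro ⟨z, k⟩ ⟨hzW, hk⟩
      refine hsub ⟨hWV hzW, ?_⟩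
      have hk' : fibNormQ Y P z (k - fibMk Y P z d) < 1 / (n + 1) := hk
      have hda : pointSeminorm Y P z (d - a) ≤ ‖a - d‖ := by
        rw [map_sub_rev]; exact pointSeminorm_le_norm z _
      show fibNormQ Y P z (k - fibMk Y P z a) < δ
      linarith [fibNormQ_sub_mk_le k a d]

variable (Y P) in
lemma isTopologicalBasis_tube_C0SectionsP :
    IsTopologicalBasis {S | ∃ (U : Set Y) (F : (y : Y) → Fib Y P y) (ε : ℝ),
      IsOpen U ∧ F ∈ C0SectionsP Y P ∧ 0 < ε ∧ S = tube U F ε} := by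
  refine isTopologicalBasis_of_isOpen_of_nhds ?_ fun e u he hu => ?_
  · rintro _ ⟨U, F, ε, hU, hF, -, rfl⟩
    exact isOpen_tube hU hF.1
  · obtain ⟨_, ⟨U, p, ε, hU, hε, rfl⟩, heS, hSu⟩ :=
      (isTopologicalBasis_basisP Y P).exists_subset_of_mem_open he hu
    exact ⟨_, ⟨U, hatSec Y P p, ε, hU, hatSec_mem_C0SectionsP p, hε, rfl⟩, heS, hSu⟩

end BundleTopology

theorem associated_bundle_is_hilbert_bundle_general
    (Y : Type) [TopologicalSpace Y]
    [SecondCountableTopology Y]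
    (P : Type) [NormedAddCommGroup P] [NormedSpace ℂ P]
    [SecondCountableTopology P] [HilbertCzeroModule Y P] :
    -- the sets U_{p,ε} form a base of the topology they generate
    @TopologicalSpace.IsTopologicalBasis (TotalP Y P) (topEP Y P) (basisP Y P) ∧
    -- the topology is second countable
    @SecondCountableTopology (TotalP Y P) (topEP Y P) ∧
    -- (i) fiberwise addition and scalar multiplication are continuous
    @Continuous {e : TotalP Y P × TotalP Y P // e.1.1 = e.2.1} (TotalP Y P)
      (@instTopologicalSpaceSubtype _ _
        (@instTopologicalSpaceProd _ _ (topEP Y P) (topEP Y P))) (topEP Y P)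
      (fun e => ⟨e.1.1.1, e.1.1.2 + fcast Y P e.2.symm e.1.2.2⟩) ∧
    @Continuous (ℂ × TotalP Y P) (TotalP Y P)
      (@instTopologicalSpaceProd _ _ _ (topEP Y P)) (topEP Y P)
      (fun e => ⟨e.2.1, e.1 • e.2.2⟩) ∧
    -- (ii) the norm is continuous along continuous sections vanishing at infinity
    (∀ F ∈ C0SectionsP Y P, Continuous fun y => fibNormQ Y P y (F y)) ∧
    -- (iii) the continuous sections vanishing at infinity fill out each fiber
    (∀ (y : Y) (v : Fib Y P y), ∃ F ∈ C0SectionsP Y P, F y = v) ∧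
    -- (iv) the sets U_{F,ε}, for F ∈ C₀(Y,E_P), also form a base of the topology
    @TopologicalSpace.IsTopologicalBasis (TotalP Y P) (topEP Y P)
      {S | ∃ (U : Set Y) (F : (y : Y) → Fib Y P y) (ε : ℝ), IsOpen U ∧
        F ∈ C0SectionsP Y P ∧ 0 < ε ∧
        S = {e : TotalP Y P | e.1 ∈ U ∧ fibNormQ Y P e.1 (e.2 - F e.1) < ε}} := by
  refine ⟨isTopologicalBasis_basisP Y P, secondCountableTopology_totalP Y P,
    continuous_fiberwise_add, continuous_fiberwise_smul,
    fun F hF => continuous_fibNormQ_section hF.1, fun y v => ?_,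
    isTopologicalBasis_tube_C0SectionsP Y P⟩
  obtain ⟨p, rfl⟩ := fibMk_surjective y v
  exact ⟨hatSec Y P p, hatSec_mem_C0SectionsP p, rfl⟩

/-- **Proposition 2.3 (first part).**  Let `P` be a second countable Hilbert
`C₀(Y)`-module.  The family of sets `U_{p,ε}` is a base for a second countable
topology on `E_P = ⊔_y P_y` which makes `E_P` a Hilbert bundle over `Y`. -/
theorem associated_bundle_is_hilbert_bundle
    (Y : Type) [TopologicalSpace Y] [T2Space Y] [LocallyCompactSpace Y]
    [SecondCountableTopology Y]
    (P : Type) [NormedAddCommGroup P] [NormedSpace ℂ P] [CompleteSpace P]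
    [SecondCountableTopology P] [HilbertCzeroModule Y P] :
    -- the sets U_{p,ε} form a base of the topology they generate
    @TopologicalSpace.IsTopologicalBasis (TotalP Y P) (topEP Y P) (basisP Y P) ∧
    -- the topology is second countable
    @SecondCountableTopology (TotalP Y P) (topEP Y P) ∧
    -- (i) fiberwise addition and scalar multiplication are continuous
    @Continuous {e : TotalP Y P × TotalP Y P // e.1.1 = e.2.1} (TotalP Y P)
      (@instTopologicalSpaceSubtype _ _
        (@instTopologicalSpaceProd _ _ (topEP Y P) (topEP Y P))) (topEP Y P)
      (fun e => ⟨e.1.1.1, e.1.1.2 + fcast Y P e.2.symm e.1.2.2⟩) ∧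
    @Continuous (ℂ × TotalP Y P) (TotalP Y P)
      (@instTopologicalSpaceProd _ _ _ (topEP Y P)) (topEP Y P)
      (fun e => ⟨e.2.1, e.1 • e.2.2⟩) ∧
    -- (ii) the norm is continuous along continuous sections vanishing at infinity
    (∀ F ∈ C0SectionsP Y P, Continuous fun y => fibNormQ Y P y (F y)) ∧
    -- (iii) the continuous sections vanishing at infinity fill out each fiber
    (∀ (y : Y) (v : Fib Y P y), ∃ F ∈ C0SectionsP Y P, F y = v) ∧
    -- (iv) the sets U_{F,ε}, for F ∈ C₀(Y,E_P), also form a base of the topology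
    @TopologicalSpace.IsTopologicalBasis (TotalP Y P) (topEP Y P)
      {S | ∃ (U : Set Y) (F : (y : Y) → Fib Y P y) (ε : ℝ), IsOpen U ∧
        F ∈ C0SectionsP Y P ∧ 0 < ε ∧
        S = {e : TotalP Y P | e.1 ∈ U ∧ fibNormQ Y P e.1 (e.2 - F e.1) < ε}} :=
  associated_bundle_is_hilbert_bundle_general Y P

end Stabilization
end
end

section
/- Let G be a second countable locally compact Hausdorff proper groupoid with unit space Y, let E be a Hilbert bundle over Y, and suppose given a map (g,ξ) ↦ gξ from G∗E = {(g,ξ) : s(g) = π(ξ)} to E that is algebraically a left groupoid action such that for each g the map ξ ↦ gξ is a unitary from H_{s(g)} onto H_{r(g)}. Then the action map G∗E → E (with G∗E given the relative topology from G×E) is continuous if and only if for each F ∈ C_0(Y,E) the map g ↦ g·F(s(g)) is continuous from G to E. -/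
noncomputable section
open scoped ZeroAtInfty
open Topology Filter ComplexConjugate

namespace Stabilization

variable (Y : Type) [TopologicalSpace Y]
variable (P : Type) [NormedAddCommGroup P] [NormedSpace ℂ P] [HilbertCzeroModule Y P]

variable (Y : Type) [TopologicalSpace Y]

variable (Gp : LCGroupoid Y)

/-- Transport between fibers of a Hilbert bundle over equal base points. -/
def bcast {Y : Type} [TopologicalSpace Y] (E : HilbertBundle Y) {y z : Y} (h : y = z) :
    E.H y → E.H z := fun v => h ▸ v

/-- An algebraic left action (by unitaries) of a groupoid `Gp` on a Hilbert bundle `E`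
over its unit space: for each `g`, a unitary `E_{s(g)} → E_{r(g)}`, compatible with
units, multiplication and inversion (continuity is *not* assumed here). -/
structure BundleGActionAlg {Y : Type} [TopologicalSpace Y] (Gp : LCGroupoid Y)
    (E : HilbertBundle Y) where
  act : (g : Gp.G) → E.H (Gp.s g) → E.H (Gp.r g)
  act_add : ∀ (g : Gp.G) (v w : E.H (Gp.s g)), act g (v + w) = act g v + act g w
  act_csmul : ∀ (g : Gp.G) (c : ℂ) (v : E.H (Gp.s g)), act g (c • v) = c • act g v
  act_norm : ∀ (g : Gp.G) (v : E.H (Gp.s g)), ‖act g v‖ = ‖v‖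
  act_surjective : ∀ g : Gp.G, Function.Surjective (act g)
  act_unit : ∀ (y : Y) (v : E.H y),
    act (Gp.unit y) (bcast E (Gp.s_unit y).symm v) = bcast E (Gp.r_unit y).symm v
  act_mul : ∀ (g h : Gp.G) (hc : Gp.s g = Gp.r h) (v : E.H (Gp.s h)),
    act (Gp.mul g h) (bcast E (Gp.s_mul g h hc).symm v) =
      bcast E (Gp.r_mul g h hc).symm (act g (bcast E hc.symm (act h v)))

/-! The forward implication is composition with `g ↦ (g, F (s g))`. For the converse, fix
`(g₀, ξ₀)` and a continuous section `F` with `F (s g₀) = ξ₀`. Since each `g` acts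
isometrically, `‖g η - g F(s g)‖ = ‖η - F(s g)‖`, which is small near `(g₀, ξ₀)`, while
`g ↦ g F(s g)` is continuous by hypothesis. Being approximated in norm by a continuous field
that agrees with it at a point forces continuity at that point, because the basic
neighbourhoods of a Hilbert bundle are defined by distance to sections. -/

section TotalSpace

attribute [local instance] HilbertBundle.topE

namespace HilbertBundle

variable {Y : Type} [TopologicalSpace Y] (E : HilbertBundle Y)

theorem isOpen_basic {U : Set Y} (hU : IsOpen U) {F : (y : Y) → E.H y}
    (hF : F ∈ C0Sections E.H E.topE) {ε : ℝ} (hε : 0 < ε) :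
    IsOpen {e : (y : Y) × E.H y | e.1 ∈ U ∧ ‖e.2 - F e.1‖ < ε} :=
  E.isBasis.isOpen ⟨U, F, ε, hU, hF, hε, rfl⟩

theorem continuous_proj : Continuous (Sigma.fst : ((y : Y) × E.H y) → Y) := by
  refine continuous_def.2 fun U hU => isOpen_iff_forall_mem_open.2 ?_
  rintro ⟨y, v⟩ hy
  obtain ⟨F, hF, rfl⟩ := E.fiber_full y v
  exact ⟨_, fun e he => he.1, E.isOpen_basic hU hF one_pos, hy, by simp⟩

theorem tendsto_norm_sub_section {F : (y : Y) → E.H y} (hF : F ∈ C0Sections E.H E.topE)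
    {e₀ : (y : Y) × E.H y} (h₀ : F e₀.1 = e₀.2) :
    Tendsto (fun e : (y : Y) × E.H y => ‖e.2 - F e.1‖) (𝓝 e₀) (𝓝 0) := by
  refine Metric.tendsto_nhds.2 fun ε hε => ?_
  filter_upwards [(E.isOpen_basic isOpen_univ hF hε).mem_nhds ⟨trivial, by simpa [h₀]⟩]
    with e he
  simpa using he.2

theorem continuous_norm : Continuous fun e : (y : Y) × E.H y => ‖e.2‖ := by
  refine continuous_iff_continuousAt.2 fun e₀ => ?_
  obtain ⟨F, hF, h₀⟩ := E.fiber_full e₀.1 e₀.2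
  have hF_norm : Tendsto (fun e : (y : Y) × E.H y => ‖F e.1‖) (𝓝 e₀) (𝓝 ‖e₀.2‖) :=
    h₀ ▸ ((E.norm_cont F hF).comp E.continuous_proj).tendsto e₀
  have hdiff : Tendsto (fun e : (y : Y) × E.H y => ‖e.2‖ - ‖F e.1‖) (𝓝 e₀) (𝓝 0) :=
    squeeze_zero_norm (fun e => abs_norm_sub_norm_le _ _) (E.tendsto_norm_sub_section hF h₀)
  simpa [ContinuousAt] using hdiff.add hF_norm

variable {X : Type} [TopologicalSpace X] {b : X → Y} {f k : (x : X) → E.H (b x)}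

theorem continuous_norm_sub (hf : Continuous fun x => (⟨b x, f x⟩ : (y : Y) × E.H y))
    (hk : Continuous fun x => (⟨b x, k x⟩ : (y : Y) × E.H y)) :
    Continuous fun x => ‖f x - k x‖ := by
  have hk_neg : Continuous fun x => (⟨b x, (-1 : ℂ) • k x⟩ : (y : Y) × E.H y) :=
    E.smul_cont.comp (continuous_const.prodMk hk)
  have hpair : Continuous fun x => (⟨(⟨b x, f x⟩, ⟨b x, (-1 : ℂ) • k x⟩), rfl⟩ :
      {p : ((y : Y) × E.H y) × ((y : Y) × E.H y) // p.1.1 = p.2.1}) :=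
    (hf.prodMk hk_neg).subtype_mk _
  refine (E.continuous_norm.comp (E.add_cont.comp hpair)).congr fun x => ?_
  simp [sub_eq_add_neg]

theorem continuousAt_of_tendsto_norm_sub
    (hk : Continuous fun x => (⟨b x, k x⟩ : (y : Y) × E.H y)) {x₀ : X} (h₀ : f x₀ = k x₀)
    (hfk : Tendsto (fun x => ‖f x - k x‖) (𝓝 x₀) (𝓝 0)) :
    ContinuousAt (fun x => (⟨b x, f x⟩ : (y : Y) × E.H y)) x₀ := by
  rw [ContinuousAt, E.isBasis.nhds_hasBasis.tendsto_right_iff]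
  rintro _ ⟨⟨U, F, ε, hU, hF, hε, rfl⟩, hb₀, hf₀⟩
  have hb : Continuous b := E.continuous_proj.comp hk
  have hk_near : Tendsto (fun x => ‖f x - k x‖ + ‖k x - F (b x)‖) (𝓝 x₀)
      (𝓝 ‖f x₀ - F (b x₀)‖) := by
    simpa [h₀] using hfk.add ((E.continuous_norm_sub hk (hF.1.comp hb)).tendsto x₀)
  filter_upwards [hb.continuousAt.preimage_mem_nhds (hU.mem_nhds hb₀),
    hk_near.eventually (gt_mem_nhds hf₀)] with x hxU hxε
  exact ⟨hxU, (norm_sub_le_norm_sub_add_norm_sub _ _ _).trans_lt hxε⟩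

end HilbertBundle

end TotalSpace

section Transport

variable {Y : Type} [TopologicalSpace Y] (E : HilbertBundle Y) {y z : Y} (h : y = z)

theorem bcast_section (F : (y : Y) → E.H y) : bcast E h (F y) = F z := by
  subst h
  rfl

theorem norm_bcast_sub (v : E.H y) (F : (y : Y) → E.H y) :
    ‖bcast E h v - F z‖ = ‖v - F y‖ := by
  subst h
  rfl

end Transport

theorem BundleGActionAlg.norm_act_sub {Y : Type} [TopologicalSpace Y] {Gp : LCGroupoid Y}
    {E : HilbertBundle Y} (A : BundleGActionAlg Gp E) (g : Gp.G) (v w : E.H (Gp.s g)) :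
    ‖A.act g v - A.act g w‖ = ‖v - w‖ := by
  have hsub : A.act g (v - w) = A.act g v - A.act g w :=
    map_sub (AddMonoidHom.mk' (A.act g) (A.act_add g)) v w
  rw [← hsub, A.act_norm]

theorem bundle_action_continuous_iff_general
    (Y : Type) [TopologicalSpace Y]
    (Gp : LCGroupoid Y) (E : HilbertBundle Y) (A : BundleGActionAlg Gp E) :
    @Continuous {q : Gp.G × ((y : Y) × E.H y) // Gp.s q.1 = q.2.1} ((y : Y) × E.H y)
      (@instTopologicalSpaceSubtype _ _ (@instTopologicalSpaceProd _ _ _ E.topE)) E.topE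
      (fun q => ⟨Gp.r q.1.1, A.act q.1.1 (bcast E q.2.symm q.1.2.2)⟩) ↔
    ∀ F ∈ C0Sections E.H E.topE,
      @Continuous Gp.G ((y : Y) × E.H y) _ E.topE
        (fun g => ⟨Gp.r g, A.act g (F (Gp.s g))⟩) := by
  let _ := E.topE
  have hcont_elt : Continuous fun q : {q : Gp.G × ((y : Y) × E.H y) // Gp.s q.1 = q.2.1} =>
      q.1.1 := continuous_fst.comp continuous_subtype_val
  have hcont_vec : Continuous fun q : {q : Gp.G × ((y : Y) × E.H y) // Gp.s q.1 = q.2.1} =>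
      q.1.2 := continuous_snd.comp continuous_subtype_val
  constructor
  · intro hcont F hF
    exact hcont.comp ((continuous_id.prodMk (hF.1.comp Gp.s_cont)).subtype_mk fun _ => rfl)
  · intro hact
    refine continuous_iff_continuousAt.2 fun q₀ => ?_
    obtain ⟨F, hF, hF₀⟩ := E.fiber_full _ q₀.1.2.2
    refine E.continuousAt_of_tendsto_norm_sub
      (k := fun q : {q : Gp.G × ((y : Y) × E.H y) // Gp.s q.1 = q.2.1} =>
        A.act q.1.1 (F (Gp.s q.1.1)))
      ((hact F hF).comp hcont_elt) ?_ ?_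
    · rw [← hF₀, bcast_section]
    · simp only [A.norm_act_sub, norm_bcast_sub]
      exact (E.tendsto_norm_sub_section hF hF₀).comp (hcont_vec.tendsto q₀)

/-- **Proposition 2.4.**  Let `G` be a (second countable locally compact Hausdorff
proper) groupoid with unit space `Y`, `E` a Hilbert bundle over `Y`, and suppose given
an algebraic left unitary groupoid action of `G` on `E`.  Then the action map
`G∗E → E` is continuous (for the relative topology of `G×E` on `G∗E`) if and only if
for each `F ∈ C₀(Y,E)` the map `g ↦ g·F(s(g))` is continuous from `G` to `E`. -/
theorem bundle_action_continuous_iff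
    (Y : Type) [TopologicalSpace Y] [T2Space Y] [LocallyCompactSpace Y]
    [SecondCountableTopology Y]
    (Gp : LCGroupoid Y) (E : HilbertBundle Y) (A : BundleGActionAlg Gp E) :
    @Continuous {q : Gp.G × ((y : Y) × E.H y) // Gp.s q.1 = q.2.1} ((y : Y) × E.H y)
      (@instTopologicalSpaceSubtype _ _ (@instTopologicalSpaceProd _ _ _ E.topE)) E.topE
      (fun q => ⟨Gp.r q.1.1, A.act q.1.1 (bcast E q.2.symm q.1.2.2)⟩) ↔
    ∀ F ∈ C0Sections E.H E.topE,
      @Continuous Gp.G ((y : Y) × E.H y) _ E.topE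
        (fun g => ⟨Gp.r g, A.act g (F (Gp.s g))⟩) :=
  bundle_action_continuous_iff_general Y Gp E A

end Stabilization
end
end
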